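/- arXiv:1408.3074 — 2 statements merged into one kernel-verified Lean document; each statement's English description precedes it below -/
import Mathlib

section
/- Let C_n be the cycle on n vertices (n ≥ 3). The sparing number of C_n is φ(C_n) = 0 if n is even and φ(C_n) = 1 if n is odd. -/
open Pointwise

/-- The induced set-label on (potential) edges: the sumset of the end-vertex labels. -/
def edgeLabel {V : Type*} (f : V → Finset ℕ) : Sym2 V → Finset ℕ :=
  Sym2.lift ⟨fun u v => f u + f v, fun u v => add_comm (f u) (f v)⟩

/-- An integer additive set-indexer (IASI) of a simple graph `G`: an injective assignment
of nonempty finite sets of non-negative integers to the vertices such that the induced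
sumset-labeling of the edges is also injective. -/
structure IsIASI {V : Type*} (G : SimpleGraph V) (f : V → Finset ℕ) : Prop where
  nonempty : ∀ v, (f v).Nonempty
  inj : Function.Injective f
  edgeInj : Set.InjOn (edgeLabel f) G.edgeSet

/-- A weak IASI: an IASI for which every edge label has cardinality equal to the maximum of
the cardinalities of the labels of its end vertices. -/
structure IsWeakIASI {V : Type*} (G : SimpleGraph V) (f : V → Finset ℕ) extends
    IsIASI G f : Prop where
  weak : ∀ ⦃u v⦄, G.Adj u v → (f u + f v).card = max (f u).card (f v).card

/-- The number of mono-indexed edges of `G` under the labeling `f`, i.e. the number of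
edges whose set-label is a singleton. -/
noncomputable def monoEdgeCount {V : Type*} (G : SimpleGraph V) (f : V → Finset ℕ) : ℕ :=
  {e ∈ G.edgeSet | (edgeLabel f e).card = 1}.ncard

/-- The sparing number of `G`: the minimum number of mono-indexed edges taken over all
weak IASIs of `G`. -/
noncomputable def sparingNumber {V : Type*} (G : SimpleGraph V) : ℕ :=
  sInf {k | ∃ f : V → Finset ℕ, IsWeakIASI G f ∧ monoEdgeCount G f = k}

/-!
In a weak IASI the Cauchy–Davenport bound `|A + B| ≥ |A| + |B| - 1` together with
`|A + B| = max |A| |B|` forces an end of every edge to be mono-indexed. So if no edge is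
mono-indexed, "being mono-indexed" is a proper 2-colouring. Conversely, for an independent
set `S` and an injection `ι : V → ℕ`, labelling `v` by `{2^(ι v)}`, or by
`{2^(ι v), 2^(ι v) + 1}` when `v ∈ S`, is a weak IASI whose mono-indexed edges have both ends
outside `S`. Hence a finite graph has sparing number `0` iff it is bipartite, which settles even
cycles and gives `φ(C_n) ≥ 1` for odd `n`; for odd `n` the odd-indexed vertices of `C_n` are
independent and their complement spans the single edge `{n - 1, 0}`.
-/

section CanonicallyOrdered

variable {α : Type*} [DecidableEq α] [AddCommMonoid α] [PartialOrder α]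
  [CanonicallyOrderedAdd α]

theorem Finset.eq_of_singleton_add_eq_singleton_add {a b : α} {s t : Finset α}
    (hs : 0 ∈ s) (ht : 0 ∈ t) (h : {a} + s = {b} + t) : a = b := by
  have le_of_mem {c d : α} {u : Finset α} (hcd : c ∈ ({d} : Finset α) + u) : d ≤ c := by
    obtain ⟨_, hd, x, -, rfl⟩ := Finset.mem_add.mp hcd
    rw [Finset.mem_singleton.mp hd]
    exact le_self_add
  have ha : a ∈ {b} + t :=
    h ▸ by simpa using Finset.add_mem_add (Finset.mem_singleton_self a) hs
  have hb : b ∈ {a} + s :=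
    h ▸ by simpa using Finset.add_mem_add (Finset.mem_singleton_self b) ht
  exact le_antisymm (le_of_mem hb) (le_of_mem ha)

end CanonicallyOrdered

theorem Sym2.toFinset_injective {α : Type*} [DecidableEq α] :
    Function.Injective (Sym2.toFinset : Sym2 α → Finset α) :=
  fun _ _ h => Sym2.ext fun a => by rw [← Sym2.mem_toFinset, h, Sym2.mem_toFinset]

theorem Sym2.eq_of_two_pow_add_two_pow_eq {i j k l : ℕ} (hij : i ≠ j) (hkl : k ≠ l)
    (h : 2 ^ i + 2 ^ j = 2 ^ k + 2 ^ l) : s(i, j) = s(k, l) := by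
  have hpair : ({i, j} : Finset ℕ) = {k, l} :=
    Finset.geomSum_injective le_rfl (by simpa [Finset.sum_pair hij, Finset.sum_pair hkl])
  apply Sym2.toFinset_injective
  rwa [Sym2.toFinset_mk_eq, Sym2.toFinset_mk_eq]

theorem Fin.val_eq_of_val_sub_eq_one {n : ℕ} {a b : Fin n} (h : (a - b).val = 1) :
    a.val = b.val + 1 ∨ (a.val = 0 ∧ b.val + 1 = n) := by
  rcases le_or_gt b a with hba | hab
  · rw [Fin.coe_sub_iff_le.mpr hba] at h
    omega
  · rw [Fin.coe_sub_iff_lt.mpr hab] at h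
    have := b.isLt
    omega

variable {V : Type*} {G : SimpleGraph V}

namespace IsWeakIASI

variable {f : V → Finset ℕ}

theorem card_eq_one_or_card_eq_one (hf : IsWeakIASI G f) {u v : V} (h : G.Adj u v) :
    (f u).card = 1 ∨ (f v).card = 1 := by
  have hcd := cauchy_davenport_add_of_linearOrder_isCancelAdd (hf.nonempty u) (hf.nonempty v)
  have hu := (hf.nonempty u).card_pos
  have hv := (hf.nonempty v).card_pos
  have := hf.weak h
  omega

theorem colorable_two (hf : IsWeakIASI G f)
    (hmono : ∀ ⦃u v⦄, G.Adj u v → (f u + f v).card ≠ 1) : G.Colorable 2 := by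
  refine Fintype.card_prop ▸
    (SimpleGraph.Coloring.mk (fun v => (f v).card = 1) fun {u v} h huv => ?_).colorable
  have hboth : (f u).card = 1 ∧ (f v).card = 1 := by
    have := hf.card_eq_one_or_card_eq_one h
    tauto
  exact hmono h (by rw [hf.weak h, hboth.1, hboth.2, max_self])

theorem colorable_two_of_monoEdgeCount_eq_zero [Finite V] (hf : IsWeakIASI G f)
    (h0 : monoEdgeCount G f = 0) : G.Colorable 2 := by
  rw [monoEdgeCount, Set.ncard_eq_zero] at h0
  exact hf.colorable_two fun u v h hcard =>
    Set.eq_empty_iff_forall_notMem.mp h0 s(u, v) ⟨h, hcard⟩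

end IsWeakIASI

open Classical in
noncomputable def pairOffsets (S : Set V) (v : V) : Finset ℕ :=
  if v ∈ S then {0, 1} else {0}

/-- The least element `2^(ι u) + 2^(ι v)` of the label of an edge `uv` recovers the edge
through its binary expansion. -/
noncomputable def pairLabel (ι : V → ℕ) (S : Set V) (v : V) : Finset ℕ :=
  {2 ^ ι v} + pairOffsets S v

section pairLabel

variable {ι : V → ℕ} {S : Set V}

theorem zero_mem_pairOffsets (v : V) : 0 ∈ pairOffsets S v := by
  unfold pairOffsets; split_ifs <;> simp

theorem card_pairOffsets_add {u v : V} (h : ¬(u ∈ S ∧ v ∈ S)) :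
    (pairOffsets S u + pairOffsets S v).card =
      max (pairOffsets S u).card (pairOffsets S v).card := by
  unfold pairOffsets; split_ifs <;> first | exact absurd ⟨‹_›, ‹_›⟩ h | decide

theorem notMem_of_card_pairOffsets_add_eq_one {u v : V}
    (h : (pairOffsets S u + pairOffsets S v).card = 1) : u ∉ S ∧ v ∉ S := by
  unfold pairOffsets at h
  split_ifs at h <;> first | exact ⟨‹_›, ‹_›⟩ | exact absurd h (by decide)

theorem pairLabel_add_pairLabel (u v : V) :
    pairLabel ι S u + pairLabel ι S v =
      {2 ^ ι u + 2 ^ ι v} + (pairOffsets S u + pairOffsets S v) := by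
  rw [pairLabel, pairLabel, add_add_add_comm, Finset.singleton_add_singleton]

theorem pairLabel_injective (hι : Function.Injective ι) : Function.Injective (pairLabel ι S) :=
  fun u v h => hι <| Nat.pow_right_injective le_rfl <|
    Finset.eq_of_singleton_add_eq_singleton_add (zero_mem_pairOffsets u)
      (zero_mem_pairOffsets v) h

theorem isWeakIASI_pairLabel (hι : Function.Injective ι) (hS : G.IsIndepSet S) :
    IsWeakIASI G (pairLabel ι S) where
  nonempty v :=
    ⟨2 ^ ι v + 0, Finset.add_mem_add (Finset.mem_singleton_self _) (zero_mem_pairOffsets v)⟩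
  inj := pairLabel_injective hι
  edgeInj := by
    rintro ⟨u, v⟩ huv ⟨x, y⟩ hxy h
    change pairLabel ι S u + pairLabel ι S v = pairLabel ι S x + pairLabel ι S y at h
    rw [pairLabel_add_pairLabel, pairLabel_add_pairLabel] at h
    have hsum := Finset.eq_of_singleton_add_eq_singleton_add
      (Finset.add_mem_add (zero_mem_pairOffsets u) (zero_mem_pairOffsets v))
      (Finset.add_mem_add (zero_mem_pairOffsets x) (zero_mem_pairOffsets y)) h
    exact Sym2.map.injective hι <| Sym2.eq_of_two_pow_add_two_pow_eq
      (hι.ne (G.ne_of_adj huv)) (hι.ne (G.ne_of_adj hxy)) hsum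
  weak {u v} h := by
    rw [pairLabel_add_pairLabel, Finset.card_singleton_add, pairLabel, pairLabel,
      Finset.card_singleton_add, Finset.card_singleton_add]
    exact card_pairOffsets_add fun huv => hS huv.1 huv.2 (G.ne_of_adj h) h

theorem notMem_of_mem_of_card_edgeLabel_pairLabel_eq_one {e : Sym2 V}
    (he : (edgeLabel (pairLabel ι S) e).card = 1) {v : V} (hv : v ∈ e) : v ∉ S := by
  induction e using Sym2.ind with
  | h x y =>
    change (pairLabel ι S x + pairLabel ι S y).card = 1 at he
    rw [pairLabel_add_pairLabel, Finset.card_singleton_add] at he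
    rcases Sym2.mem_iff.mp hv with rfl | rfl
    exacts [(notMem_of_card_pairOffsets_add_eq_one he).1,
      (notMem_of_card_pairOffsets_add_eq_one he).2]

theorem monoEdgeCount_pairLabel_eq_zero (hS : G.IsIndepSet Sᶜ) :
    monoEdgeCount G (pairLabel ι S) = 0 := by
  have hempty : {e ∈ G.edgeSet | (edgeLabel (pairLabel ι S) e).card = 1} = ∅ := by
    refine Set.eq_empty_of_forall_notMem fun e ⟨he, hmono⟩ => ?_
    induction e using Sym2.ind with
    | h u v =>
      exact hS (notMem_of_mem_of_card_edgeLabel_pairLabel_eq_one hmono (Sym2.mem_mk_left u v))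
        (notMem_of_mem_of_card_edgeLabel_pairLabel_eq_one hmono (Sym2.mem_mk_right u v))
        (G.ne_of_adj he) he
  rw [monoEdgeCount, hempty, Set.ncard_empty]

end pairLabel

theorem sparingNumber_le {f : V → Finset ℕ} (hf : IsWeakIASI G f) :
    sparingNumber G ≤ monoEdgeCount G f :=
  Nat.sInf_le ⟨f, hf, rfl⟩

theorem sparingNumber_eq_zero_of_colorable_two [Countable V] (h : G.Colorable 2) :
    sparingNumber G = 0 := by
  obtain ⟨ι, hι⟩ := Countable.exists_injective_nat V
  obtain ⟨c⟩ := h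
  have hS : G.IsIndepSet {v | c v = 0} := fun u hu v hv _ huv => c.valid huv (hu.trans hv.symm)
  have hSc : G.IsIndepSet {v | c v = 0}ᶜ := fun u hu v hv _ huv =>
    c.valid huv (by simp only [Set.mem_compl_iff, Set.mem_ofPred_eq] at hu hv; omega)
  exact Nat.eq_zero_of_le_zero <|
    (sparingNumber_le (isWeakIASI_pairLabel hι hS)).trans (monoEdgeCount_pairLabel_eq_zero hSc).le

theorem sparingNumber_eq_zero_iff [Finite V] : sparingNumber G = 0 ↔ G.Colorable 2 := by
  refine ⟨fun h => ?_, sparingNumber_eq_zero_of_colorable_two⟩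
  obtain ⟨ι, hι⟩ := Countable.exists_injective_nat V
  have hne : {k | ∃ f, IsWeakIASI G f ∧ monoEdgeCount G f = k}.Nonempty :=
    ⟨_, _, isWeakIASI_pairLabel (S := ∅) hι (Set.pairwise_empty _), rfl⟩
  rw [sparingNumber] at h
  obtain ⟨f, hf, h0⟩ := h ▸ Nat.sInf_mem hne
  exact hf.colorable_two_of_monoEdgeCount_eq_zero h0

namespace SimpleGraph

variable {n : ℕ}

theorem cycleGraph_adj_val {u v : Fin n} (h : (cycleGraph n).Adj u v) :
    u.val = v.val + 1 ∨ v.val = u.val + 1 ∨ (u.val = 0 ∧ v.val + 1 = n) ∨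
      (v.val = 0 ∧ u.val + 1 = n) := by
  rcases cycleGraph_adj'.mp h with h | h
  · have := Fin.val_eq_of_val_sub_eq_one h
    omega
  · have := Fin.val_eq_of_val_sub_eq_one h
    omega

theorem not_colorable_two_cycleGraph_of_odd (h2 : 2 ≤ n) (hn : Odd n) :
    ¬(cycleGraph n).Colorable 2 := fun h => by
  have := h.chromaticNumber_le
  rw [chromaticNumber_cycleGraph_of_odd n h2 hn] at this
  norm_num at this

theorem isIndepSet_cycleGraph_odd_val : (cycleGraph n).IsIndepSet {v | v.val % 2 = 1} :=
  fun u hu v hv _ huv => by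
    have := cycleGraph_adj_val huv
    simp only [Set.mem_ofPred_eq] at hu hv
    omega

theorem monoEdgeCount_cycleGraph_pairLabel_odd_val_le_one :
    monoEdgeCount (cycleGraph n) (pairLabel Fin.val {v | v.val % 2 = 1}) ≤ 1 := by
  have hends {e} (he : e ∈ (cycleGraph n).edgeSet)
      (hmono : (edgeLabel (pairLabel Fin.val {v : Fin n | v.val % 2 = 1}) e).card = 1) :
      ∃ u v : Fin n, e = s(u, v) ∧ u.val = 0 ∧ v.val + 1 = n := by
    induction e using Sym2.ind with | h u v => ?_
    rw [mem_edgeSet] at he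
    have hu := notMem_of_mem_of_card_edgeLabel_pairLabel_eq_one hmono (Sym2.mem_mk_left u v)
    have hv := notMem_of_mem_of_card_edgeLabel_pairLabel_eq_one hmono (Sym2.mem_mk_right u v)
    simp only [Set.mem_ofPred_eq] at hu hv
    rcases cycleGraph_adj_val he with h | h | h | h
    · omega
    · omega
    · exact ⟨u, v, rfl, h⟩
    · exact ⟨v, u, Sym2.eq_swap, h⟩
  rw [monoEdgeCount, Set.ncard_le_one]
  rintro e ⟨he, hmono⟩ e' ⟨he', hmono'⟩
  obtain ⟨u, v, rfl, hu, hv⟩ := hends he hmono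
  obtain ⟨u', v', rfl, hu', hv'⟩ := hends he' hmono'
  rw [Fin.ext_iff.mpr (hu.trans hu'.symm), Fin.ext_iff.mpr (by omega : v.val = v'.val)]

theorem sparingNumber_cycleGraph_le_one : sparingNumber (cycleGraph n) ≤ 1 :=
  (sparingNumber_le (isWeakIASI_pairLabel Fin.val_injective isIndepSet_cycleGraph_odd_val)).trans
    monoEdgeCount_cycleGraph_pairLabel_odd_val_le_one

end SimpleGraph

/-- For `n ≥ 3`, the sparing number of the cycle `C n` is `0` if `n` is even
and `1` if `n` is odd. -/
theorem cycle_sparingNumber (n : ℕ) (hn : 3 ≤ n) :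
    (Even n → sparingNumber (SimpleGraph.cycleGraph n) = 0) ∧
    (Odd n → sparingNumber (SimpleGraph.cycleGraph n) = 1) := by
  refine ⟨fun heven => sparingNumber_eq_zero_iff.mpr
    (SimpleGraph.cycleGraph.bicoloring_of_even n heven).colorable, fun hodd => ?_⟩
  have hpos : sparingNumber (SimpleGraph.cycleGraph n) ≠ 0 := fun h =>
    SimpleGraph.not_colorable_two_cycleGraph_of_odd (by omega) hodd
      (sparingNumber_eq_zero_iff.mp h)
  have hle : sparingNumber (SimpleGraph.cycleGraph n) ≤ 1 :=
    SimpleGraph.sparingNumber_cycleGraph_le_one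
  omega
end

section
/- For integers m, n > 1, the sparing number of the (m,n)-complete friendship graph (windmill graph) K_1 + mK_n is m·n·(n−1)/2. -/
open Pointwise

/-- The join `G + H` of two graphs on disjoint vertex sets: all vertices and edges of
`G` and `H`, together with every edge joining a vertex of `G` to a vertex of `H`. -/
def graphJoin {V W : Type*} (G : SimpleGraph V) (H : SimpleGraph W) :
    SimpleGraph (V ⊕ W) where
  Adj x y :=
    match x, y with
    | Sum.inl a, Sum.inl b => G.Adj a b
    | Sum.inr a, Sum.inr b => H.Adj a b
    | Sum.inl _, Sum.inr _ => True
    | Sum.inr _, Sum.inl _ => True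
  symm := by
    constructor
    rintro (a | a) (b | b) h
    · exact G.adj_symm h
    · trivial
    · trivial
    · exact H.adj_symm h
  loopless := by
    constructor
    rintro (a | a) h
    · exact G.irrefl h
    · exact H.irrefl h

/-- The disjoint union `mG` of `m` copies of the graph `G`. -/
def graphCopies {V : Type*} (m : ℕ) (G : SimpleGraph V) : SimpleGraph (Fin m × V) where
  Adj x y := x.1 = y.1 ∧ G.Adj x.2 y.2
  symm := by
    constructor
    rintro ⟨i, u⟩ ⟨j, v⟩ ⟨h1, h2⟩
    exact ⟨h1.symm, G.adj_symm h2⟩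
  loopless := by
    constructor
    rintro ⟨i, u⟩ ⟨-, h⟩
    exact G.irrefl h

/-!
In a weak IASI every edge label satisfies `|A + B| = max |A| |B|`, while Cauchy–Davenport in `ℕ`
gives `|A + B| ≥ |A| + |B| - 1`; hence one end of every edge is mono-indexed, and an edge is
mono-indexed exactly when both ends are. So the mono-indexed vertices form a vertex cover `M` and
the mono-indexed edges are the edges inside `M`. In each copy of `K_n` at most one vertex misses
`M`, and if one does the hub lies in `M`; sending that vertex to the hub maps the edges of `mK_n`
injectively to edges inside `M`, so at least `|E(mK_n)| = m n (n - 1) / 2` edges are mono-indexed.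
Labelling the hub by `{0, 1}` and the other vertices by distinct singletons `{2 ^ k}` attains this:
binary expansions keep the sums `2 ^ a + 2 ^ b` apart.
-/

open Finset Function SimpleGraph

theorem Finset.card_add_eq_one_iff {α : Type*} [DecidableEq α] [Add α] [IsCancelAdd α]
    {s t : Finset α} (hs : s.Nonempty) (ht : t.Nonempty) :
    #(s + t) = 1 ↔ #s = 1 ∧ #t = 1 := by
  refine ⟨fun h => ⟨?_, ?_⟩, fun ⟨hs1, ht1⟩ => ?_⟩
  · have := card_le_card_add_right (s := s) ht
    have := hs.card_pos
    omega
  · have := card_le_card_add_left (t := t) hs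
    have := ht.card_pos
    omega
  · obtain ⟨a, rfl⟩ := card_eq_one.mp hs1
    obtain ⟨b, rfl⟩ := card_eq_one.mp ht1
    simp

theorem monoEdgeCount_eq_ncard {V : Type*} (G : SimpleGraph V) {f : V → Finset ℕ}
    (hf : ∀ v, (f v).Nonempty) :
    monoEdgeCount G f = {e ∈ G.edgeSet | ∀ v ∈ e, #(f v) = 1}.ncard := by
  unfold monoEdgeCount
  congr 1
  ext e
  induction e using Sym2.ind with
  | _ u v => simp [edgeLabel, Finset.card_add_eq_one_iff (hf u) (hf v)]

theorem IsWeakIASI.isVertexCover {V : Type*} {G : SimpleGraph V} {f : V → Finset ℕ}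
    (hf : IsWeakIASI G f) : G.IsVertexCover {v | #(f v) = 1} := by
  intro u v huv
  have h := cauchy_davenport_add_of_linearOrder_isCancelAdd (hf.nonempty u) (hf.nonempty v)
  have := (hf.nonempty u).card_pos
  have := (hf.nonempty v).card_pos
  rw [hf.weak huv] at h
  simp only [Set.mem_ofPred_eq]
  omega

theorem degree_graphCopies_top {m : ℕ} {α : Type*} [Fintype α] [DecidableEq α]
    [DecidableRel (graphCopies m (⊤ : SimpleGraph α)).Adj] (p : Fin m × α) :
    (graphCopies m (⊤ : SimpleGraph α)).degree p = Fintype.card α - 1 := by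
  have : (graphCopies m (⊤ : SimpleGraph α)).neighborFinset p =
      (univ.erase p.2).map ⟨Prod.mk p.1, Prod.mk_right_injective p.1⟩ := by
    ext ⟨j, v⟩
    simp only [mem_neighborFinset, mem_map, mem_erase, mem_univ, and_true]
    simp [graphCopies, eq_comm, and_comm]
  rw [← card_neighborFinset_eq_degree, this, card_map, card_erase_of_mem (mem_univ _), card_univ]

theorem ncard_edgeSet_graphCopies_top (m : ℕ) (α : Type*) [Fintype α] :
    (graphCopies m (⊤ : SimpleGraph α)).edgeSet.ncard =
      m * Fintype.card α * (Fintype.card α - 1) / 2 := by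
  classical
  have h := (graphCopies m (⊤ : SimpleGraph α)).sum_degrees_eq_twice_card_edges
  simp only [degree_graphCopies_top, sum_const, card_univ, Fintype.card_prod, Fintype.card_fin,
    smul_eq_mul] at h
  rw [← coe_edgeFinset, Set.ncard_coe_finset]
  omega

abbrev windmill (m : ℕ) (α : Type*) : SimpleGraph (Fin 1 ⊕ Fin m × α) :=
  graphJoin ⊥ (graphCopies m (⊤ : SimpleGraph α))

namespace windmill

variable {m : ℕ} {α : Type*} {M : Set (Fin 1 ⊕ Fin m × α)}

open Classical in
noncomputable def collapse (M : Set (Fin 1 ⊕ Fin m × α)) (p : Fin m × α) : Fin 1 ⊕ Fin m × α :=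
  if Sum.inr p ∈ M then Sum.inr p else Sum.inl 0

theorem collapse_of_mem {p : Fin m × α} (hp : Sum.inr p ∈ M) : collapse M p = Sum.inr p :=
  if_pos hp

theorem collapse_of_notMem {p : Fin m × α} (hp : Sum.inr p ∉ M) : collapse M p = Sum.inl 0 :=
  if_neg hp

theorem collapse_mem (hM : (windmill m α).IsVertexCover M) (p : Fin m × α) :
    collapse M p ∈ M := by
  by_cases hp : Sum.inr p ∈ M
  · rwa [collapse_of_mem hp]
  · rw [collapse_of_notMem hp]
    exact (hM (v := Sum.inl 0) (w := Sum.inr p) trivial).resolve_right hp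

theorem inr_mem_of_adj_of_notMem (hM : (windmill m α).IsVertexCover M) {p q : Fin m × α}
    (hpq : (graphCopies m (⊤ : SimpleGraph α)).Adj p q) (hp : Sum.inr p ∉ M) : Sum.inr q ∈ M :=
  (hM (v := Sum.inr p) (w := Sum.inr q) hpq).resolve_left hp

theorem adj_collapse (hM : (windmill m α).IsVertexCover M) {p q : Fin m × α}
    (hpq : (graphCopies m (⊤ : SimpleGraph α)).Adj p q) :
    (windmill m α).Adj (collapse M p) (collapse M q) := by
  by_cases hp : Sum.inr p ∈ M
  · by_cases hq : Sum.inr q ∈ M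
    · rw [collapse_of_mem hp, collapse_of_mem hq]
      exact hpq
    · rw [collapse_of_mem hp, collapse_of_notMem hq]
      trivial
  · rw [collapse_of_notMem hp, collapse_of_mem (inr_mem_of_adj_of_notMem hM hpq hp)]
    trivial

theorem eq_of_collapse_eq (hM : (windmill m α).IsVertexCover M) {p q p' q' : Fin m × α}
    (hpq : (graphCopies m (⊤ : SimpleGraph α)).Adj p q)
    (hpq' : (graphCopies m (⊤ : SimpleGraph α)).Adj p' q')
    (hp : collapse M p = collapse M p') (hq : collapse M q = collapse M q') : p = p' := by
  by_cases hpM : Sum.inr p ∈ M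
  · rw [collapse_of_mem hpM] at hp
    by_cases hpM' : Sum.inr p' ∈ M
    · rw [collapse_of_mem hpM'] at hp
      exact Sum.inr_injective hp
    · rw [collapse_of_notMem hpM'] at hp
      exact absurd hp Sum.inr_ne_inl
  have hpM' : Sum.inr p' ∉ M := fun h => by
    rw [collapse_of_notMem hpM, collapse_of_mem h] at hp
    exact Sum.inl_ne_inr hp
  have hqq' : q = q' := by
    rwa [collapse_of_mem (inr_mem_of_adj_of_notMem hM hpq hpM),
      collapse_of_mem (inr_mem_of_adj_of_notMem hM hpq' hpM'), Sum.inr_injective.eq_iff] at hq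
  have hcopy : p.1 = p'.1 := hpq.1.trans (hqq' ▸ hpq'.1.symm)
  by_contra hne
  have hpp' : (graphCopies m (⊤ : SimpleGraph α)).Adj p p' :=
    ⟨hcopy, fun h => hne (Prod.ext hcopy h)⟩
  exact hpM' (inr_mem_of_adj_of_notMem hM hpp' hpM)

theorem ncard_edgeSet_graphCopies_le [Finite α] (hM : (windmill m α).IsVertexCover M) :
    (graphCopies m (⊤ : SimpleGraph α)).edgeSet.ncard ≤
      {e ∈ (windmill m α).edgeSet | ∀ v ∈ e, v ∈ M}.ncard := by
  refine Set.ncard_le_ncard_of_injOn (Sym2.map (collapse M)) ?_ ?_ (Set.toFinite _)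
  · intro e he
    induction e using Sym2.ind with
    | _ p q =>
      rw [Sym2.map_mk]
      exact ⟨adj_collapse hM he, Sym2.forall_mem_pair.2 ⟨collapse_mem hM p, collapse_mem hM q⟩⟩
  · intro e he e' he' h
    induction e using Sym2.ind with
    | _ p q =>
    induction e' using Sym2.ind with
    | _ p' q' =>
      rw [SimpleGraph.mem_edgeSet] at he he'
      rw [Sym2.map_mk, Sym2.map_mk, Sym2.eq_iff] at h
      rcases h with ⟨hp, hq⟩ | ⟨hp, hq⟩
      · rw [eq_of_collapse_eq hM he he' hp hq, eq_of_collapse_eq hM he.symm he'.symm hq hp]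
      · rw [eq_of_collapse_eq hM he he'.symm hp hq, eq_of_collapse_eq hM he.symm he' hq hp,
          Sym2.eq_swap]

end windmill

theorem Nat.sym2_eq_of_two_pow_add_two_pow_eq {a b c d : ℕ} (hab : a ≠ b) (hcd : c ≠ d)
    (h : 2 ^ a + 2 ^ b = 2 ^ c + 2 ^ d) : s(a, b) = s(c, d) := by
  have hpair : ({a, b} : Finset ℕ) = {c, d} :=
    Finset.geomSum_injective le_rfl (by simpa [sum_pair hab, sum_pair hcd] using h)
  rw [Sym2.eq_iff, ← Set.pair_eq_pair_iff, ← coe_pair, ← coe_pair, hpair]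

theorem Nat.eq_of_pair_succ_eq {a b : ℕ} (h : ({a, a + 1} : Finset ℕ) = {b, b + 1}) : a = b := by
  have ha : a ∈ ({b, b + 1} : Finset ℕ) := h ▸ mem_insert_self a _
  have hb : b ∈ ({a, a + 1} : Finset ℕ) := h.symm ▸ mem_insert_self b _
  simp only [mem_insert, mem_singleton] at ha hb
  omega

theorem mem_edgeSet_graphJoin_bot {V W : Type*} {H : SimpleGraph W} {e : Sym2 (V ⊕ W)} :
    e ∈ (graphJoin (⊥ : SimpleGraph V) H).edgeSet ↔
      (∃ a w, e = s(Sum.inl a, Sum.inr w)) ∨ ∃ u v, H.Adj u v ∧ e = s(Sum.inr u, Sum.inr v) := by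
  induction e using Sym2.ind with
  | _ x y =>
    rcases x with a | u <;> rcases y with b | v <;> simp [graphJoin, Sym2.eq_swap]
    refine ⟨fun h => ⟨u, v, h, .inl ⟨rfl, rfl⟩⟩, ?_⟩
    rintro ⟨u, v, h, ⟨rfl, rfl⟩ | ⟨rfl, rfl⟩⟩
    exacts [h, h.symm]

section powLabel

variable {W : Type*} {k : W → ℕ}

def powLabel (k : W → ℕ) : Fin 1 ⊕ W → Finset ℕ :=
  Sum.elim (fun _ => {0, 1}) (fun w => {2 ^ k w})

theorem edgeLabel_powLabel_inl_inr (a : Fin 1) (w : W) :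
    edgeLabel (powLabel k) s(Sum.inl a, Sum.inr w) = {2 ^ k w, 2 ^ k w + 1} := by
  ext x
  simp [edgeLabel, powLabel, mem_add]
  omega

theorem edgeLabel_powLabel_inr_inr (u v : W) :
    edgeLabel (powLabel k) s(Sum.inr u, Sum.inr v) = {2 ^ k u + 2 ^ k v} := by
  simp [edgeLabel, powLabel]

theorem isWeakIASI_powLabel (H : SimpleGraph W) (hk : Injective k) :
    IsWeakIASI (graphJoin ⊥ H) (powLabel k) where
  nonempty := by rintro (a | w) <;> simp [powLabel]
  inj := by
    rintro (a | u) (b | v) h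
    · rw [Subsingleton.elim a b]
    · simpa [powLabel] using congrArg card h
    · simpa [powLabel] using congrArg card h
    · simpa [powLabel, hk.eq_iff] using h
  edgeInj := by
    intro e he e' he' h
    rcases mem_edgeSet_graphJoin_bot.1 he with ⟨a, w, rfl⟩ | ⟨u, v, huv, rfl⟩ <;>
      rcases mem_edgeSet_graphJoin_bot.1 he' with ⟨a', w', rfl⟩ | ⟨u', v', huv', rfl⟩ <;>
      simp only [edgeLabel_powLabel_inl_inr, edgeLabel_powLabel_inr_inr] at h
    · rw [Subsingleton.elim a a', hk (Nat.pow_right_injective le_rfl (Nat.eq_of_pair_succ_eq h))]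
    · simpa using congrArg card h
    · simpa using congrArg card h
    · have := Nat.sym2_eq_of_two_pow_add_two_pow_eq (hk.ne huv.ne) (hk.ne huv'.ne)
        (singleton_injective h)
      rw [← Sym2.map_mk, ← Sym2.map_mk] at this
      exact congrArg (Sym2.map Sum.inr) (Sym2.map.injective hk this)
  weak := by
    rintro (a | u) (b | v) h
    · exact h.elim
    · simp [powLabel]
    · simp [powLabel]
    · simp [powLabel]

theorem monoEdgeCount_powLabel (H : SimpleGraph W) (hk : Injective k) :
    monoEdgeCount (graphJoin ⊥ H) (powLabel k) = H.edgeSet.ncard := by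
  rw [monoEdgeCount_eq_ncard _ (isWeakIASI_powLabel H hk).nonempty,
    ← Set.ncard_image_of_injective H.edgeSet (Sym2.map.injective Sum.inr_injective)]
  refine congrArg Set.ncard (Set.ext fun e => ⟨?_, ?_⟩)
  · rintro ⟨he, hmono⟩
    rcases mem_edgeSet_graphJoin_bot.1 he with ⟨a, w, rfl⟩ | ⟨u, v, huv, rfl⟩
    · simpa [powLabel] using hmono (Sum.inl a) (Sym2.mem_mk_left _ _)
    · exact ⟨s(u, v), huv, Sym2.map_mk _ _ _⟩
  · rintro ⟨e, he, rfl⟩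
    induction e using Sym2.ind with
    | _ u v => simpa [powLabel] using mem_edgeSet_graphJoin_bot.2 (.inr ⟨u, v, he, rfl⟩)

end powLabel

theorem windmill_sparingNumber_general (m n : ℕ) :
    sparingNumber
      (graphJoin (⊥ : SimpleGraph (Fin 1))
        (graphCopies m (⊤ : SimpleGraph (Fin n)))) = m * n * (n - 1) / 2 := by
  obtain ⟨k, hk⟩ := Countable.exists_injective_nat (Fin m × Fin n)
  have hcount := ncard_edgeSet_graphCopies_top m (Fin n)
  rw [Fintype.card_fin] at hcount
  rw [← hcount]
  refine IsLeast.csInf_eq ⟨⟨powLabel k, isWeakIASI_powLabel _ hk, monoEdgeCount_powLabel _ hk⟩, ?_⟩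
  rintro _ ⟨f, hf, rfl⟩
  rw [monoEdgeCount_eq_ncard _ hf.nonempty]
  exact windmill.ncard_edgeSet_graphCopies_le hf.isVertexCover

/-- For integers `m, n > 1`, the sparing number of the `(m,n)`-complete friendship
(windmill) graph `K_1 + mK_n` is `m·n·(n−1)/2`. -/
theorem windmill_sparingNumber (m n : ℕ) (hm : 1 < m) (hn : 1 < n) :
    sparingNumber
      (graphJoin (⊥ : SimpleGraph (Fin 1))
        (graphCopies m (⊤ : SimpleGraph (Fin n)))) = m * n * (n - 1) / 2 :=
  windmill_sparingNumber_general m n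
end
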